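/- (Closure of Λ_n under strictly positive substitution) If φ ∈ Λ_n has only strictly positive occurrences of the k-ary relation symbol R and θ ∈ Λ_m, then the formula φ(R/θ), obtained by substituting θ for R (with the i-th argument of R substituted for the free occurrences of v_i in θ, after renaming bound variables), belongs to Λ_{max(n,m)}. -/
import Mathlib


/- Common deep embedding of the syntax of `L_HAP` (and its fragments/extensions),
   Beeson's logic of partial terms LPT, the theories HA, HAP, the fixpoint
   theories, the almost negative hierarchy and Kleene-style realizability,
   following Arai/Buchholz/van den Berg–van Slooten as in the paper. -/

namespace ConsIID

/-- Terms of `L_HAP`: variables, `0`, `S`, `+`, `×`, the combinator constants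
`k`, `s`, `p_l`, `p_r`, `p`, `succ`, `r` and binary application. -/
inductive Tm : Type where
  | var : ℕ → Tm
  | zero : Tm
  | S : Tm → Tm
  | add : Tm → Tm → Tm
  | mul : Tm → Tm → Tm
  | K : Tm
  | Sc : Tm
  | Pl : Tm
  | Pr : Tm
  | Pa : Tm
  | Succ : Tm
  | Rec : Tm
  | app : Tm → Tm → Tm
  deriving DecidableEq

namespace Tm

/-- Free variables of a term. -/
def fv : Tm → Finset ℕ
  | var n => {n}
  | S t => t.fv
  | add s t | mul s t | app s t => s.fv ∪ t.fv
  | _ => ∅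

/-- Simultaneous substitution in a term. -/
def subst (σ : ℕ → Tm) : Tm → Tm
  | var n => σ n
  | zero => zero
  | S t => S (t.subst σ)
  | add s t => add (s.subst σ) (t.subst σ)
  | mul s t => mul (s.subst σ) (t.subst σ)
  | app s t => app (s.subst σ) (t.subst σ)
  | K => K
  | Sc => Sc
  | Pl => Pl
  | Pr => Pr
  | Pa => Pa
  | Succ => Succ
  | Rec => Rec

/-- Substitution of a single term for a variable. -/
def subst1 (t : Tm) (x : ℕ) (s : Tm) : Tm :=
  t.subst fun v => if v = x then s else var v

/-- Terms of the arithmetical fragment `L_HA` (`0`, `S`, `+`, `×`). -/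
def isArith : Tm → Prop
  | var _ => True
  | zero => True
  | S t => t.isArith
  | add s t | mul s t => s.isArith ∧ t.isArith
  | _ => False

/-- Terms of the combinatory fragment (without `S`, `+`, `×`). -/
def isComb : Tm → Prop
  | var _ => True
  | zero => True
  | K | Sc | Pl | Pr | Pa | Succ | Rec => True
  | app s t => s.isComb ∧ t.isComb
  | _ => False

/-- Constant symbols. -/
def isConst : Tm → Prop
  | zero | K | Sc | Pl | Pr | Pa | Succ | Rec => True
  | _ => False

/-- Numerals. -/
def numeral : ℕ → Tm
  | 0 => zero
  | n + 1 => S (numeral n)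

/-- A standard Gödel numbering of terms. -/
def code : Tm → ℕ
  | var n => Nat.pair 0 n
  | zero => Nat.pair 1 0
  | S t => Nat.pair 2 t.code
  | add s t => Nat.pair 3 (Nat.pair s.code t.code)
  | mul s t => Nat.pair 4 (Nat.pair s.code t.code)
  | K => Nat.pair 5 0
  | Sc => Nat.pair 6 0
  | Pl => Nat.pair 7 0
  | Pr => Nat.pair 8 0
  | Pa => Nat.pair 9 0
  | Succ => Nat.pair 10 0
  | Rec => Nat.pair 11 0
  | app s t => Nat.pair 12 (Nat.pair s.code t.code)

end Tm

/-- Formulae over the terms of `L_HAP` and a type `R` of additional relation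
symbols (each applied to a list of terms); `L_HAP` itself is `Fm Empty`. -/
inductive Fm (R : Type) : Type where
  | falsum : Fm R
  | eq : Tm → Tm → Fm R
  | rel : R → List Tm → Fm R
  | and : Fm R → Fm R → Fm R
  | or : Fm R → Fm R → Fm R
  | imp : Fm R → Fm R → Fm R
  | all : ℕ → Fm R → Fm R
  | ex : ℕ → Fm R → Fm R

namespace Fm

variable {R R' : Type}

/-- Free variables. -/
def fv : Fm R → Finset ℕ
  | falsum => ∅
  | eq s t => s.fv ∪ t.fv
  | rel _ ts => ts.foldr (fun t A => t.fv ∪ A) ∅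
  | and φ ψ | or φ ψ | imp φ ψ => φ.fv ∪ ψ.fv
  | all x φ | ex x φ => φ.fv.erase x

/-- Bound variables. -/
def bv : Fm R → Finset ℕ
  | falsum | eq _ _ | rel _ _ => ∅
  | and φ ψ | or φ ψ | imp φ ψ => φ.bv ∪ ψ.bv
  | all x φ | ex x φ => insert x φ.bv

/-- Number of logical connectives/quantifiers. -/
def size : Fm R → ℕ
  | falsum | eq _ _ | rel _ _ => 0
  | and φ ψ | or φ ψ | imp φ ψ => φ.size + ψ.size + 1
  | all _ φ | ex _ φ => φ.size + 1

/-- Simultaneous substitution of terms for the free variables. -/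
def subst : Fm R → (ℕ → Tm) → Fm R
  | falsum, _ => falsum
  | eq s t, σ => eq (s.subst σ) (t.subst σ)
  | rel r ts, σ => rel r (ts.map (Tm.subst σ))
  | and φ ψ, σ => and (φ.subst σ) (ψ.subst σ)
  | or φ ψ, σ => or (φ.subst σ) (ψ.subst σ)
  | imp φ ψ, σ => imp (φ.subst σ) (ψ.subst σ)
  | all x φ, σ => all x (φ.subst fun v => if v = x then Tm.var v else σ v)
  | ex x φ, σ => ex x (φ.subst fun v => if v = x then Tm.var v else σ v)

/-- Substitution of one term for one variable, `φ(x/s)`. -/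
def subst1 (φ : Fm R) (x : ℕ) (s : Tm) : Fm R :=
  φ.subst fun v => if v = x then s else Tm.var v

theorem size_subst (φ : Fm R) (σ : ℕ → Tm) : (φ.subst σ).size = φ.size := by
  induction φ generalizing σ with
  | falsum => rfl
  | eq s t => rfl
  | rel r ts => rfl
  | and φ ψ ihφ ihψ => simp [Fm.subst, Fm.size, ihφ, ihψ]
  | or φ ψ ihφ ihψ => simp [Fm.subst, Fm.size, ihφ, ihψ]
  | imp φ ψ ihφ ihψ => simp [Fm.subst, Fm.size, ihφ, ihψ]
  | all x φ ih => simp [Fm.subst, Fm.size, ih]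
  | ex x φ ih => simp [Fm.subst, Fm.size, ih]

/-- Renaming of relation symbols (arguments unchanged). -/
def mapRel (f : R → R') : Fm R → Fm R'
  | falsum => falsum
  | eq s t => eq s t
  | rel r ts => rel (f r) ts
  | and φ ψ => and (φ.mapRel f) (ψ.mapRel f)
  | or φ ψ => or (φ.mapRel f) (ψ.mapRel f)
  | imp φ ψ => imp (φ.mapRel f) (ψ.mapRel f)
  | all x φ => all x (φ.mapRel f)
  | ex x φ => ex x (φ.mapRel f)

/-- Substitution of the formula `θ` for the relation symbol `r₀`: an occurrence
`r₀(t₀,…,t_{k-1})` becomes `θ(v₀/t₀, … , v_{k-1}/t_{k-1})`. -/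
def substRel [DecidableEq R] (r₀ : R) (θ : Fm R) : Fm R → Fm R
  | falsum => falsum
  | eq s t => eq s t
  | rel r ts => if r = r₀ then θ.subst (fun i => ts.getD i (Tm.var i)) else rel r ts
  | and φ ψ => and (substRel r₀ θ φ) (substRel r₀ θ ψ)
  | or φ ψ => or (substRel r₀ θ φ) (substRel r₀ θ ψ)
  | imp φ ψ => imp (substRel r₀ θ φ) (substRel r₀ θ ψ)
  | all x φ => all x (substRel r₀ θ φ)
  | ex x φ => ex x (substRel r₀ θ φ)

/-- Number of occurrences of the relation symbol `r₀`. -/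
def countRel [DecidableEq R] (r₀ : R) : Fm R → ℕ
  | falsum | eq _ _ => 0
  | rel r _ => if r = r₀ then 1 else 0
  | and φ ψ | or φ ψ | imp φ ψ => φ.countRel r₀ + ψ.countRel r₀
  | all _ φ | ex _ φ => φ.countRel r₀

/-- `r₀` occurs (at least once). -/
def occursRel [DecidableEq R] (r₀ : R) (φ : Fm R) : Prop := 0 < φ.countRel r₀

/-- All occurrences of `r₀` are strictly positive (never in the antecedent
of an implication). -/
def sposRel [DecidableEq R] (r₀ : R) : Fm R → Prop
  | falsum | eq _ _ | rel _ _ => True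
  | and φ ψ | or φ ψ => φ.sposRel r₀ ∧ ψ.sposRel r₀
  | imp φ ψ => φ.countRel r₀ = 0 ∧ ψ.sposRel r₀
  | all _ φ | ex _ φ => φ.sposRel r₀

/-- All relation symbols are applied according to the arity function `ar`. -/
def arityOK (ar : R → ℕ) : Fm R → Prop
  | falsum | eq _ _ => True
  | rel r ts => ts.length = ar r
  | and φ ψ | or φ ψ | imp φ ψ => φ.arityOK ar ∧ ψ.arityOK ar
  | all _ φ | ex _ φ => φ.arityOK ar

/-- Every occurrence of the relation symbol `r₀` has exactly `n` arguments. -/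
def relArity (r₀ : R) (n : ℕ) : Fm R → Prop
  | falsum | eq _ _ => True
  | rel r ts => r = r₀ → ts.length = n
  | and φ ψ | or φ ψ | imp φ ψ => φ.relArity r₀ n ∧ ψ.relArity r₀ n
  | all _ φ | ex _ φ => φ.relArity r₀ n

/-- Atomic formulae. -/
def Atomic : Fm R → Prop
  | falsum | eq _ _ | rel _ _ => True
  | _ => False

/-- Atomic formulae other than `⊥` and equations. -/
def isRelAtom : Fm R → Prop
  | rel _ _ => True
  | _ => False

/-- Almost negative: no `∨`, and `∃` only immediately in front of equations. -/
def AN : Fm R → Prop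
  | falsum | eq _ _ | rel _ _ => True
  | and φ ψ | imp φ ψ => φ.AN ∧ ψ.AN
  | or _ _ => False
  | all _ φ => φ.AN
  | ex _ φ => match φ with
    | eq _ _ => True
    | _ => False

/-- Negative: no `∨` and no `∃` whatsoever. -/
def Neg : Fm R → Prop
  | falsum | eq _ _ | rel _ _ => True
  | and φ ψ | imp φ ψ => φ.Neg ∧ ψ.Neg
  | or _ _ => False
  | all _ φ => φ.Neg
  | ex _ _ => False

/-- The formula is in the language with terms from `TS` and relation symbols
from `P` (equality and `⊥` always belong to the language). -/
def inLang (TS : Tm → Prop) (P : R → Prop) : Fm R → Prop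
  | falsum => True
  | eq s t => TS s ∧ TS t
  | rel r ts => P r ∧ ∀ t ∈ ts, TS t
  | and φ ψ | or φ ψ | imp φ ψ => φ.inLang TS P ∧ ψ.inLang TS P
  | all _ φ | ex _ φ => φ.inLang TS P

/-- Arithmetical (`L_HA`-) formulae: all terms arithmetical. -/
def isArith (φ : Fm R) : Prop := φ.inLang Tm.isArith fun _ => True

/-- `τ↓`, i.e. `τ = τ` ("`τ` denotes"). -/
def dn (τ : Tm) : Fm R := eq τ τ

/-- Negation `¬φ := φ → ⊥`. -/
def not (φ : Fm R) : Fm R := φ.imp falsum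

/-- Biconditional. -/
def iff (φ ψ : Fm R) : Fm R := (φ.imp ψ).and (ψ.imp φ)

/-- Weak (Kleene) equality `σ ≃ τ := (σ↓ ∨ τ↓) → σ = τ`. -/
def weq (s t : Tm) : Fm R := (Fm.or (dn s) (dn t)).imp (eq s t)

/-- Conjunction of a list of formulae (`⊤` for the empty list). -/
def conj : List (Fm R) → Fm R
  | [] => Fm.imp Fm.falsum Fm.falsum
  | φ :: l => φ.and (conj l)

/-- Universal closure over a list of variables. -/
def alls (xs : List ℕ) (φ : Fm R) : Fm R := xs.foldr Fm.all φ

/-- Instantiation of the first two variables `v₀, v₁` by terms. -/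
def at2 (φ : Fm R) (a b : Tm) : Fm R :=
  φ.subst fun i => if i = 0 then a else if i = 1 then b else Tm.var i

/-- A standard Gödel numbering of `L_HAP`-formulae. -/
def code : Fm Empty → ℕ
  | falsum => Nat.pair 0 0
  | eq s t => Nat.pair 1 (Nat.pair s.code t.code)
  | rel r _ => r.elim
  | and φ ψ => Nat.pair 2 (Nat.pair φ.code ψ.code)
  | or φ ψ => Nat.pair 3 (Nat.pair φ.code ψ.code)
  | imp φ ψ => Nat.pair 4 (Nat.pair φ.code ψ.code)
  | all x φ => Nat.pair 5 (Nat.pair x φ.code)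
  | ex x φ => Nat.pair 6 (Nat.pair x φ.code)

end Fm

/-- A variable fresh for the finite set `s`. -/
def fresh (s : Finset ℕ) : ℕ := s.sup id + 1

/-- α-equivalence of formulae. -/
inductive AEq {R : Type} : Fm R → Fm R → Prop where
  | falsum : AEq Fm.falsum Fm.falsum
  | eq (s t : Tm) : AEq (Fm.eq s t) (Fm.eq s t)
  | rel (r : R) (ts : List Tm) : AEq (Fm.rel r ts) (Fm.rel r ts)
  | and {φ φ' ψ ψ' : Fm R} : AEq φ φ' → AEq ψ ψ' → AEq (Fm.and φ ψ) (Fm.and φ' ψ')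
  | or {φ φ' ψ ψ' : Fm R} : AEq φ φ' → AEq ψ ψ' → AEq (Fm.or φ ψ) (Fm.or φ' ψ')
  | imp {φ φ' ψ ψ' : Fm R} : AEq φ φ' → AEq ψ ψ' → AEq (Fm.imp φ ψ) (Fm.imp φ' ψ')
  | all {x x' : ℕ} {φ φ' : Fm R} (z : ℕ) :
      z ∉ φ.fv ∪ φ'.fv ∪ φ.bv ∪ φ'.bv →
      AEq (φ.subst1 x (Tm.var z)) (φ'.subst1 x' (Tm.var z)) →
      AEq (Fm.all x φ) (Fm.all x' φ')
  | ex {x x' : ℕ} {φ φ' : Fm R} (z : ℕ) :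
      z ∉ φ.fv ∪ φ'.fv ∪ φ.bv ∪ φ'.bv →
      AEq (φ.subst1 x (Tm.var z)) (φ'.subst1 x' (Tm.var z)) →
      AEq (Fm.ex x φ) (Fm.ex x' φ')

/-- Beeson's Hilbert-style logic of partial terms, with additional axioms `Γ`. -/
inductive LPT {R : Type} (Γ : Set (Fm R)) : Fm R → Prop where
  | hyp {φ : Fm R} : φ ∈ Γ → LPT Γ φ
  | imp_self (φ : Fm R) : LPT Γ (φ.imp φ)
  | imp_trans {φ ψ χ : Fm R} : LPT Γ (φ.imp ψ) → LPT Γ (ψ.imp χ) → LPT Γ (φ.imp χ)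
  | and_intro {φ ψ χ : Fm R} : LPT Γ (φ.imp ψ) → LPT Γ (φ.imp χ) → LPT Γ (φ.imp (ψ.and χ))
  | or_elim {φ ψ χ : Fm R} : LPT Γ (φ.imp χ) → LPT Γ (ψ.imp χ) → LPT Γ ((φ.or ψ).imp χ)
  | uncurry {φ ψ χ : Fm R} : LPT Γ (φ.imp (ψ.imp χ)) → LPT Γ ((φ.and ψ).imp χ)
  | gen_all {φ ψ : Fm R} {x : ℕ} : x ∉ φ.fv → LPT Γ (φ.imp ψ) → LPT Γ (φ.imp (Fm.all x ψ))
  | gen_ex {φ ψ : Fm R} {x : ℕ} : x ∉ ψ.fv → LPT Γ (φ.imp ψ) → LPT Γ ((Fm.ex x φ).imp ψ)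
  | mp {φ ψ : Fm R} : LPT Γ φ → LPT Γ (φ.imp ψ) → LPT Γ ψ
  | and_left (φ ψ : Fm R) : LPT Γ ((φ.and ψ).imp φ)
  | and_right (φ ψ : Fm R) : LPT Γ ((φ.and ψ).imp ψ)
  | or_inl (φ ψ : Fm R) : LPT Γ (φ.imp (φ.or ψ))
  | or_inr (φ ψ : Fm R) : LPT Γ (ψ.imp (φ.or ψ))
  | curry {φ ψ χ : Fm R} : LPT Γ ((φ.and ψ).imp χ) → LPT Γ (φ.imp (ψ.imp χ))
  | efq (φ : Fm R) : LPT Γ (Fm.falsum.imp φ)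
  | inst_all (φ : Fm R) (x : ℕ) (τ : Tm) :
      LPT Γ (((Fm.all x φ).and (Fm.dn τ)).imp (φ.subst1 x τ))
  | inst_ex (φ : Fm R) (x : ℕ) (τ : Tm) :
      LPT Γ (((φ.subst1 x τ).and (Fm.dn τ)).imp (Fm.ex x φ))
  | eq_refl (x : ℕ) : LPT Γ (Fm.all x (Fm.eq (Tm.var x) (Tm.var x)))
  | eq_sym : LPT Γ (Fm.all 0 (Fm.all 1
      ((Fm.eq (Tm.var 0) (Tm.var 1)).imp (Fm.eq (Tm.var 1) (Tm.var 0)))))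
  | eq_trans : LPT Γ (Fm.all 0 (Fm.all 1 (Fm.all 2
      (((Fm.eq (Tm.var 0) (Tm.var 1)).and (Fm.eq (Tm.var 1) (Tm.var 2))).imp
        (Fm.eq (Tm.var 0) (Tm.var 2))))))
  | eq_rel {r : R} {ts us : List Tm} : ts.length = us.length →
      LPT Γ (((Fm.rel r ts).and (Fm.conj (List.zipWith Fm.eq ts us))).imp (Fm.rel r us))
  | eq_S {s t : Tm} :
      LPT Γ (((Fm.eq s t).and (Fm.dn (Tm.S s))).imp (Fm.eq (Tm.S s) (Tm.S t)))
  | eq_add {s₁ s₂ t₁ t₂ : Tm} :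
      LPT Γ ((((Fm.eq s₁ t₁).and (Fm.eq s₂ t₂)).and (Fm.dn (Tm.add s₁ s₂))).imp
        (Fm.eq (Tm.add s₁ s₂) (Tm.add t₁ t₂)))
  | eq_mul {s₁ s₂ t₁ t₂ : Tm} :
      LPT Γ ((((Fm.eq s₁ t₁).and (Fm.eq s₂ t₂)).and (Fm.dn (Tm.mul s₁ s₂))).imp
        (Fm.eq (Tm.mul s₁ s₂) (Tm.mul t₁ t₂)))
  | eq_app {s₁ s₂ t₁ t₂ : Tm} :
      LPT Γ ((((Fm.eq s₁ t₁).and (Fm.eq s₂ t₂)).and (Fm.dn (Tm.app s₁ s₂))).imp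
        (Fm.eq (Tm.app s₁ s₂) (Tm.app t₁ t₂)))
  | strict_S {t : Tm} : LPT Γ ((Fm.dn (Tm.S t)).imp (Fm.dn t))
  | strict_add_l {s t : Tm} : LPT Γ ((Fm.dn (Tm.add s t)).imp (Fm.dn s))
  | strict_add_r {s t : Tm} : LPT Γ ((Fm.dn (Tm.add s t)).imp (Fm.dn t))
  | strict_mul_l {s t : Tm} : LPT Γ ((Fm.dn (Tm.mul s t)).imp (Fm.dn s))
  | strict_mul_r {s t : Tm} : LPT Γ ((Fm.dn (Tm.mul s t)).imp (Fm.dn t))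
  | strict_app_l {s t : Tm} : LPT Γ ((Fm.dn (Tm.app s t)).imp (Fm.dn s))
  | strict_app_r {s t : Tm} : LPT Γ ((Fm.dn (Tm.app s t)).imp (Fm.dn t))
  | strict_eq_l {s t : Tm} : LPT Γ ((Fm.eq s t).imp (Fm.dn s))
  | strict_eq_r {s t : Tm} : LPT Γ ((Fm.eq s t).imp (Fm.dn t))
  | strict_rel {r : R} {ts : List Tm} {τ : Tm} : τ ∈ ts →
      LPT Γ ((Fm.rel r ts).imp (Fm.dn τ))
  | dn_var (x : ℕ) : LPT Γ (Fm.dn (Tm.var x))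
  | dn_const {c : Tm} : c.isConst → LPT Γ (Fm.dn c)

/-- The induction axiom for `φ` in the variable `x`. -/
def indAx {R : Type} (φ : Fm R) (x : ℕ) : Fm R :=
  (φ.subst1 x Tm.zero).imp
    ((Fm.all x (φ.imp (φ.subst1 x (Tm.S (Tm.var x))))).imp (Fm.all x φ))

/-- The axioms of `HAP` (with relation symbols `R` and induction for the
formulae satisfying `Ind`). -/
inductive HAPax (R : Type) (Ind : Fm R → Prop) : Fm R → Prop where
  | total_S : HAPax R Ind (Fm.dn (Tm.S (Tm.var 0)))
  | total_add : HAPax R Ind (Fm.dn (Tm.add (Tm.var 0) (Tm.var 1)))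
  | total_mul : HAPax R Ind (Fm.dn (Tm.mul (Tm.var 0) (Tm.var 1)))
  | succ_inj : HAPax R Ind
      ((Fm.eq (Tm.S (Tm.var 0)) (Tm.S (Tm.var 1))).imp (Fm.eq (Tm.var 0) (Tm.var 1)))
  | succ_ne_zero : HAPax R Ind (Fm.not (Fm.eq Tm.zero (Tm.S (Tm.var 0))))
  | add_zero : HAPax R Ind (Fm.eq (Tm.add (Tm.var 0) Tm.zero) (Tm.var 0))
  | add_succ : HAPax R Ind
      (Fm.eq (Tm.add (Tm.var 0) (Tm.S (Tm.var 1))) (Tm.S (Tm.add (Tm.var 0) (Tm.var 1))))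
  | mul_zero : HAPax R Ind (Fm.eq (Tm.mul (Tm.var 0) Tm.zero) Tm.zero)
  | mul_succ : HAPax R Ind
      (Fm.eq (Tm.mul (Tm.var 0) (Tm.S (Tm.var 1)))
        (Tm.add (Tm.mul (Tm.var 0) (Tm.var 1)) (Tm.var 0)))
  | k_ax : HAPax R Ind (Fm.eq (Tm.app (Tm.app Tm.K (Tm.var 0)) (Tm.var 1)) (Tm.var 0))
  | s_total : HAPax R Ind (Fm.dn (Tm.app (Tm.app Tm.Sc (Tm.var 0)) (Tm.var 1)))
  | s_ax : HAPax R Ind (Fm.weq (Tm.app (Tm.app (Tm.app Tm.Sc (Tm.var 0)) (Tm.var 1)) (Tm.var 2))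
      (Tm.app (Tm.app (Tm.var 0) (Tm.var 2)) (Tm.app (Tm.var 1) (Tm.var 2))))
  | pl_total : HAPax R Ind (Fm.dn (Tm.app Tm.Pl (Tm.var 0)))
  | pr_total : HAPax R Ind (Fm.dn (Tm.app Tm.Pr (Tm.var 0)))
  | pl_pair : HAPax R Ind
      (Fm.eq (Tm.app Tm.Pl (Tm.app (Tm.app Tm.Pa (Tm.var 0)) (Tm.var 1))) (Tm.var 0))
  | pr_pair : HAPax R Ind
      (Fm.eq (Tm.app Tm.Pr (Tm.app (Tm.app Tm.Pa (Tm.var 0)) (Tm.var 1))) (Tm.var 1))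
  | pair_proj : HAPax R Ind
      (Fm.eq (Tm.app (Tm.app Tm.Pa (Tm.app Tm.Pl (Tm.var 0))) (Tm.app Tm.Pr (Tm.var 0))) (Tm.var 0))
  | succ_ax : HAPax R Ind (Fm.eq (Tm.app Tm.Succ (Tm.var 0)) (Tm.S (Tm.var 0)))
  | rec_zero : HAPax R Ind
      (Fm.eq (Tm.app (Tm.app (Tm.app Tm.Rec (Tm.var 0)) (Tm.var 1)) Tm.zero) (Tm.var 0))
  | rec_succ : HAPax R Ind
      (Fm.eq (Tm.app (Tm.app (Tm.app Tm.Rec (Tm.var 0)) (Tm.var 1)) (Tm.S (Tm.var 2)))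
        (Tm.app (Tm.app (Tm.var 1) (Tm.var 2))
          (Tm.app (Tm.app (Tm.app Tm.Rec (Tm.var 0)) (Tm.var 1)) (Tm.var 2))))
  | ind {φ : Fm R} (x : ℕ) : Ind φ → HAPax R Ind (indAx φ x)

/-- The theory `HAP(L)` for a language with relation symbols `R`
(with induction for all formulae of the language). -/
def HAPth (R : Type) : Set (Fm R) := {φ | HAPax R (fun _ => True) φ}

/-- The axioms of Heyting arithmetic (over intuitionistic predicate logic),
with induction for the formulae satisfying `Ind`. -/
inductive HAax (R : Type) (Ind : Fm R → Prop) : Fm R → Prop where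
  | succ_inj : HAax R Ind
      ((Fm.eq (Tm.S (Tm.var 0)) (Tm.S (Tm.var 1))).imp (Fm.eq (Tm.var 0) (Tm.var 1)))
  | succ_ne_zero : HAax R Ind (Fm.not (Fm.eq Tm.zero (Tm.S (Tm.var 0))))
  | add_zero : HAax R Ind (Fm.eq (Tm.add (Tm.var 0) Tm.zero) (Tm.var 0))
  | add_succ : HAax R Ind
      (Fm.eq (Tm.add (Tm.var 0) (Tm.S (Tm.var 1))) (Tm.S (Tm.add (Tm.var 0) (Tm.var 1))))
  | mul_zero : HAax R Ind (Fm.eq (Tm.mul (Tm.var 0) Tm.zero) Tm.zero)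
  | mul_succ : HAax R Ind
      (Fm.eq (Tm.mul (Tm.var 0) (Tm.S (Tm.var 1)))
        (Tm.add (Tm.mul (Tm.var 0) (Tm.var 1)) (Tm.var 0)))
  | ind {φ : Fm R} (x : ℕ) : Ind φ → HAax R Ind (indAx φ x)

/-- The theory `HA` (in the language `L_HA`). -/
def HAth : Set (Fm Empty) := {φ | HAax Empty Fm.isArith φ}

/-- The totality axioms `τ↓` for the terms satisfying `TS`. -/
def dnSet {R : Type} (TS : Tm → Prop) : Set (Fm R) := {ψ | ∃ τ, TS τ ∧ ψ = Fm.dn τ}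

/-- Provability in ordinary intuitionistic predicate logic (= LPT plus the
axiom `τ↓` for every term `τ` of the language, given by `TS`). -/
def IProv {R : Type} (TS : Tm → Prop) (Γ : Set (Fm R)) (φ : Fm R) : Prop :=
  LPT (Γ ∪ dnSet TS) φ

/-- Provability in Heyting arithmetic. -/
def HAprov (φ : Fm Empty) : Prop := IProv Tm.isArith HAth φ

/-- `Σ`-equations `∃x (σ = τ)`. -/
inductive SigmaE {R : Type} : Fm R → Prop where
  | mk (x : ℕ) (s t : Tm) : SigmaE (Fm.ex x (Fm.eq s t))

/-- The hierarchy `Λ_n` of almost negative formulae:  `Λ₀` is generated from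
`Σ`-equations and atoms by `∧`; `Λ_{n+1}` is additionally closed under `∀` and
implications with `Λ_n`-antecedents. -/
inductive Lam {R : Type} : ℕ → Fm R → Prop where
  | sigmaE {n : ℕ} {φ : Fm R} : SigmaE φ → Lam n φ
  | atom {n : ℕ} {φ : Fm R} : φ.Atomic → Lam n φ
  | and {n : ℕ} {φ ψ : Fm R} : Lam n φ → Lam n ψ → Lam n (φ.and ψ)
  | all {n : ℕ} {x : ℕ} {φ : Fm R} : Lam (n + 1) φ → Lam (n + 1) (Fm.all x φ)
  | imp {n : ℕ} {φ ψ : Fm R} : Lam n φ → Lam (n + 1) ψ → Lam (n + 1) (φ.imp ψ)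

/-- `Λnf₀`: conjunctions `ψ ∧ ⋀ φ_i` with `ψ` a `Σ`-equation and the `φ_i`
atomic other than `⊥` and equations. -/
inductive Lnf0 {R : Type} : Fm R → Prop where
  | base {φ : Fm R} : SigmaE φ → Lnf0 φ
  | snoc {φ ψ : Fm R} : Lnf0 φ → ψ.isRelAtom → Lnf0 (φ.and ψ)

/-- Nonempty conjunctions of implications with antecedents in `A` and
consequents in `B`. -/
inductive ImpConj {R : Type} (A B : Fm R → Prop) : Fm R → Prop where
  | single {φ ψ : Fm R} : A φ → B ψ → ImpConj A B (φ.imp ψ)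
  | snoc {χ φ ψ : Fm R} : ImpConj A B χ → A φ → B ψ → ImpConj A B (χ.and (φ.imp ψ))

/-- The normal form hierarchy `Λnf_n`. -/
def Lnf {R : Type} : ℕ → Fm R → Prop
  | 0 => Lnf0
  | n + 1 => fun ξ => ∃ (x : ℕ) (χ : Fm R), ξ = Fm.all x χ ∧ ImpConj (Lnf n) Lnf0 χ

/-- The defined inequality `s < t := ∃z (s + S(z) = t)`. -/
def Fm.ltF {R : Type} (s t : Tm) : Fm R :=
  let z := fresh (s.fv ∪ t.fv)
  Fm.ex z (Fm.eq (Tm.add s (Tm.S (Tm.var z))) t)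

/-- `Δ₀`-formulae of `L_HAP` (bounded quantifiers using the defined `<`). -/
inductive Delta0 : Fm Empty → Prop where
  | atom {φ : Fm Empty} : φ.Atomic → Delta0 φ
  | and {φ ψ : Fm Empty} : Delta0 φ → Delta0 ψ → Delta0 (φ.and ψ)
  | or {φ ψ : Fm Empty} : Delta0 φ → Delta0 ψ → Delta0 (φ.or ψ)
  | imp {φ ψ : Fm Empty} : Delta0 φ → Delta0 ψ → Delta0 (φ.imp ψ)
  | ball {φ : Fm Empty} (x : ℕ) (t : Tm) : x ∉ t.fv → Delta0 φ →
      Delta0 (Fm.all x ((Fm.ltF (Tm.var x) t).imp φ))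
  | bex {φ : Fm Empty} (x : ℕ) (t : Tm) : x ∉ t.fv → Delta0 φ →
      Delta0 (Fm.ex x ((Fm.ltF (Tm.var x) t).and φ))

mutual
  /-- The class `Σ_n` of the arithmetical hierarchy. -/
  inductive SigmaH : ℕ → Fm Empty → Prop where
    | zero {φ : Fm Empty} : Delta0 φ → SigmaH 0 φ
    | ofPi {n : ℕ} {φ : Fm Empty} : PiH n φ → SigmaH (n + 1) φ
    | ex {n : ℕ} {φ : Fm Empty} (x : ℕ) : SigmaH (n + 1) φ → SigmaH (n + 1) (Fm.ex x φ)
  /-- The class `Π_n` of the arithmetical hierarchy. -/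
  inductive PiH : ℕ → Fm Empty → Prop where
    | zero {φ : Fm Empty} : Delta0 φ → PiH 0 φ
    | ofSigma {n : ℕ} {φ : Fm Empty} : SigmaH n φ → PiH (n + 1) φ
    | all {n : ℕ} {φ : Fm Empty} (x : ℕ) : PiH (n + 1) φ → PiH (n + 1) (Fm.all x φ)
end

/-- `PAP = HAP + LEM`. -/
def PAPth : Set (Fm Empty) := HAPth Empty ∪ {ψ | ∃ φ : Fm Empty, ψ = φ.or φ.not}

/-- `Γ(T)`: the formulae `T`-provably equivalent to a formula in `G`. -/
def eqvCls (T : Set (Fm Empty)) (G : Set (Fm Empty)) : Set (Fm Empty) :=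
  {φ | ∃ ψ ∈ G, LPT T (φ.iff ψ)}

/-- `POS_{P_n}`: strictly positive operator forms in the parameter `P_n`
(relation symbols indexed by their arity; exactly `P_n` occurs, strictly
positively, and the free variables are exactly `v₀,…,v_{n-1}`). -/
def POS (n : ℕ) (Φ : Fm ℕ) : Prop :=
  Φ.fv = Finset.range n ∧ Φ.arityOK id ∧ Φ.occursRel n ∧
    (∀ m, Φ.occursRel m → m = n) ∧ Φ.sposRel n

/-- The fixpoint predicate symbols `I_Φ` for `Φ ∈ POS_P(L_HAP)`. -/
def IDSym : Type := Σ n : ℕ, {Φ : Fm ℕ // POS n Φ}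

/-- The list of variables `v₀,…,v_{n-1}`. -/
def varList (n : ℕ) : List Tm := (List.range n).map Tm.var

/-- The fixpoint axiom `∀ x⃗ (I_Φ(x⃗) ↔ Φ(I_Φ; x⃗))`. -/
def fixAx (s : IDSym) : Fm IDSym :=
  Fm.alls (List.range s.1)
    ((Fm.rel s (varList s.1)).iff (Fm.mapRel (fun _ => s) s.2.1))

/-- Formulae of `L_HA(ID)`: arithmetical terms, and only fixpoint predicates
for arithmetical operator forms. -/
def LHAID : Fm IDSym → Prop :=
  Fm.inLang Tm.isArith fun s : IDSym => s.2.1.isArith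

/-- The theory `IID1` (HA plus fixpoint axioms for all strictly positive
arithmetical operator forms, with induction for `L_HA(ID)`). -/
def IID1th : Set (Fm IDSym) :=
  {φ | HAax IDSym LHAID φ} ∪ {ψ | ∃ s : IDSym, s.2.1.isArith ∧ ψ = fixAx s}

/-- Provability in `IID1` (in intuitionistic predicate logic). -/
def IID1prov (φ : Fm IDSym) : Prop := IProv Tm.isArith IID1th φ

/-- The theory `IIDP1`. -/
def IIDP1th : Set (Fm IDSym) := HAPth IDSym ∪ Set.range fixAx

/-- The theory `IIDP1(Λ)`: fixpoint axioms only for almost negative operator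
forms. -/
def IIDP1Lth : Set (Fm IDSym) :=
  HAPth IDSym ∪ {ψ | ∃ s : IDSym, s.2.1.AN ∧ ψ = fixAx s}

/-- Kleene-style realizability `τ r φ` in the logic of partial terms, with the
realizing relation symbols given by `rr`. -/
def realize {R R' : Type} (rr : R → R') : Tm → Fm R → Fm R'
  | _, Fm.falsum => Fm.falsum
  | _, Fm.eq s t => Fm.eq s t
  | τ, Fm.rel r ts => Fm.rel (rr r) (ts ++ [τ])
  | τ, Fm.and φ ψ =>
      Fm.and (realize rr (Tm.app Tm.Pl τ) φ) (realize rr (Tm.app Tm.Pr τ) ψ)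
  | τ, Fm.or φ ψ =>
      Fm.and ((Fm.eq (Tm.app Tm.Pl τ) Tm.zero).imp (realize rr (Tm.app Tm.Pr τ) φ))
             ((Fm.not (Fm.eq (Tm.app Tm.Pl τ) Tm.zero)).imp (realize rr (Tm.app Tm.Pr τ) ψ))
  | τ, Fm.imp φ ψ =>
      let y := fresh (τ.fv ∪ φ.fv ∪ ψ.fv ∪ φ.bv ∪ ψ.bv)
      Fm.all y ((realize rr (Tm.var y) φ).imp
        ((Fm.dn (Tm.app τ (Tm.var y))).and (realize rr (Tm.app τ (Tm.var y)) ψ)))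
  | τ, Fm.all x φ =>
      Fm.all x ((Fm.dn (Tm.app τ (Tm.var x))).and (realize rr (Tm.app τ (Tm.var x)) φ))
  | τ, Fm.ex x φ =>
      realize rr (Tm.app Tm.Pr τ) (φ.subst1 x (Tm.app Tm.Pl τ))
  termination_by _ φ => φ.size
  decreasing_by
    all_goals simp only [Fm.size, Fm.subst1, Fm.size_subst]
    all_goals omega

/-- The operator form `P₁(v₀)`. -/
def P1 : Fm ℕ := Fm.rel 1 [Tm.var 0]

theorem P1_POS : POS 1 P1 := by
  refine ⟨?_, ?_, ?_, ?_, ?_⟩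
  · simp [P1, Fm.fv, Tm.fv]
  · simp [P1, Fm.arityOK]
  · simp [P1, Fm.occursRel, Fm.countRel]
  · intro m hm
    simp [P1, Fm.occursRel, Fm.countRel] at hm
    by_cases h : (1 : ℕ) = m
    · exact h.symm
    · simp [h] at hm
  · simp [P1, Fm.sposRel]

open Classical in
/-- The realizing fixpoint symbols: `r I_Φ := I_{v_n r Φ}` (with `r P_n := P_{n+1}`). -/
noncomputable def rID : IDSym → IDSym := fun s =>
  if h : POS (s.1 + 1) (realize (fun m => m + 1) (Tm.var s.1) s.2.1)
  then ⟨s.1 + 1, ⟨realize (fun m => m + 1) (Tm.var s.1) s.2.1, h⟩⟩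
  else ⟨1, ⟨P1, P1_POS⟩⟩

/-- Interpretation of a language with relation symbols `R` into `L_HAP`,
given an assignment `G` of `L_HAP`-formulae to the symbols; the identity on
`L_HAP` and commuting with all connectives and quantifiers. -/
def interp {R : Type} (G : R → Fm Empty) : Fm R → Fm Empty
  | Fm.falsum => Fm.falsum
  | Fm.eq s t => Fm.eq s t
  | Fm.rel r ts => (G r).subst fun i => ts.getD i (Tm.var i)
  | Fm.and φ ψ => Fm.and (interp G φ) (interp G ψ)
  | Fm.or φ ψ => Fm.or (interp G φ) (interp G ψ)
  | Fm.imp φ ψ => Fm.imp (interp G φ) (interp G ψ)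
  | Fm.all x φ => Fm.all x (interp G φ)
  | Fm.ex x φ => Fm.ex x (interp G φ)

/-- `u` applied as a ternary "update" term to `a`, `b`, `c` (substituting them
for `v₀`, `v₁`, `v₂`). -/
def updT (u a b c : Tm) : Tm :=
  u.subst fun i => if i = 0 then a else if i = 1 then b else if i = 2 then c else Tm.var i


theorem Lam_mono {R : Type} {n : ℕ} {φ : Fm R} (h : Lam n φ) :
    ∀ n', n ≤ n' → Lam n' φ := by
  induction h with
  | sigmaE h => exact fun _ _ => Lam.sigmaE h
  | atom h => exact fun _ _ => Lam.atom h
  | and _ _ ih1 ih2 => exact fun n' hn => Lam.and (ih1 n' hn) (ih2 n' hn)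
  | @all n x φ _ ih =>
    intro n' hn
    obtain ⟨k, rfl⟩ := Nat.exists_eq_add_of_le hn
    rw [show n + 1 + k = (n + k) + 1 from by omega]
    exact Lam.all (ih _ (by omega))
  | @imp n φ ψ _ _ ihφ ihψ =>
    intro n' hn
    obtain ⟨k, rfl⟩ := Nat.exists_eq_add_of_le hn
    rw [show n + 1 + k = (n + k) + 1 from by omega]
    exact Lam.imp (ihφ _ (by omega)) (ihψ _ (by omega))

theorem Lam_subst {R : Type} {m : ℕ} {θ : Fm R} (h : Lam m θ) :
    ∀ σ : ℕ → Tm, Lam m (θ.subst σ) := by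
  induction h with
  | sigmaE h =>
    intro σ
    obtain ⟨x, s, t⟩ := h
    exact Lam.sigmaE (SigmaE.mk _ _ _)
  | @atom n φ h =>
    intro σ
    cases φ with
    | falsum => exact Lam.atom trivial
    | eq s t => exact Lam.atom trivial
    | rel r ts => exact Lam.atom trivial
    | and _ _ => exact absurd h (by simp [Fm.Atomic])
    | or _ _ => exact absurd h (by simp [Fm.Atomic])
    | imp _ _ => exact absurd h (by simp [Fm.Atomic])
    | all _ _ => exact absurd h (by simp [Fm.Atomic])
    | ex _ _ => exact absurd h (by simp [Fm.Atomic])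
  | and _ _ ih1 ih2 => exact fun σ => Lam.and (ih1 σ) (ih2 σ)
  | all _ ih => exact fun σ => Lam.all (ih _)
  | imp _ _ ih1 ih2 => exact fun σ => Lam.imp (ih1 σ) (ih2 σ)

theorem substRel_of_countRel_zero {R : Type} [DecidableEq R] (r₀ : R) (θ : Fm R) :
    ∀ φ : Fm R, φ.countRel r₀ = 0 → Fm.substRel r₀ θ φ = φ := by
  intro φ
  induction φ with
  | falsum => intro _; rfl
  | eq s t => intro _; rfl
  | rel r ts =>
    intro h
    simp only [Fm.countRel] at h
    simp only [Fm.substRel]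
    split
    · next heq => simp [heq] at h
    · rfl
  | and φ ψ ih1 ih2 =>
    intro h
    simp only [Fm.countRel] at h
    simp [Fm.substRel, ih1 (by omega), ih2 (by omega)]
  | or φ ψ ih1 ih2 =>
    intro h
    simp only [Fm.countRel] at h
    simp [Fm.substRel, ih1 (by omega), ih2 (by omega)]
  | imp φ ψ ih1 ih2 =>
    intro h
    simp only [Fm.countRel] at h
    simp [Fm.substRel, ih1 (by omega), ih2 (by omega)]
  | all x φ ih =>
    intro h
    simp only [Fm.countRel] at h
    simp [Fm.substRel, ih h]
  | ex x φ ih =>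
    intro h
    simp only [Fm.countRel] at h
    simp [Fm.substRel, ih h]

/-- **Closure of `Λ_n` under strictly positive substitution** (Lemma 3.7):
if `φ ∈ Λ_n` has only strictly positive occurrences of the relation symbol
`r₀` and `θ ∈ Λ_m`, then `φ(r₀/θ) ∈ Λ_{max(n,m)}`. -/
theorem Lam_substRel {R : Type} [DecidableEq R] {n m : ℕ} (r₀ : R) (φ θ : Fm R)
    (h1 : Lam n φ) (hsp : φ.sposRel r₀) (h2 : Lam m θ) :
    Lam (max n m) (Fm.substRel r₀ θ φ) := by
  induction h1 with
  | sigmaE h =>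
    obtain ⟨x, s, t⟩ := h
    exact Lam.sigmaE (SigmaE.mk _ _ _)
  | @atom n φ h =>
    cases φ with
    | falsum => exact Lam.atom trivial
    | eq s t => exact Lam.atom trivial
    | rel r ts =>
      simp only [Fm.substRel]
      split
      · exact Lam_mono (Lam_subst h2 _) _ (le_max_right _ _)
      · exact Lam.atom trivial
    | and _ _ => exact absurd h (by simp [Fm.Atomic])
    | or _ _ => exact absurd h (by simp [Fm.Atomic])
    | imp _ _ => exact absurd h (by simp [Fm.Atomic])
    | all _ _ => exact absurd h (by simp [Fm.Atomic])
    | ex _ _ => exact absurd h (by simp [Fm.Atomic])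
  | and _ _ ih1 ih2 => exact Lam.and (ih1 hsp.1) (ih2 hsp.2)
  | @all n x φ _ ih =>
    have ihφ := ih hsp
    obtain ⟨k, hk⟩ : ∃ k, max (n + 1) m = k + 1 := ⟨max (n + 1) m - 1, by omega⟩
    rw [hk] at ihφ ⊢
    exact Lam.all ihφ
  | @imp n φ ψ hφ _ ihφ ihψ =>
    obtain ⟨hc, hs⟩ := hsp
    have ihψ' := ihψ hs
    obtain ⟨k, hk⟩ : ∃ k, max (n + 1) m = k + 1 := ⟨max (n + 1) m - 1, by omega⟩
    rw [hk] at ihψ' ⊢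
    simp only [Fm.substRel, substRel_of_countRel_zero r₀ θ φ hc]
    exact Lam.imp (Lam_mono hφ k (by omega)) ihψ'

end ConsIID
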